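/- arXiv:math/0506221 — 2 statements merged into one kernel-verified Lean document; each statement's English description precedes it below -/
import Mathlib

section
/- Let M ⊆ ℤ^m be an affine monoid, F a face of cone(M) with defining linear form α (so F = cone(M) ∩ ker α and α ≥ 0 on cone(M)), and let M_F = { a ∈ gp(M) : a + b ∈ M for some b ∈ M ∩ F }. Then M_F ∩ ker α = gp(M ∩ F). -/
noncomputable section

/-- The canonical embedding `ℤ^m → ℝ^m`. -/
def toR {m : ℕ} (x : Fin m → ℤ) : Fin m → ℝ := fun i => (x i : ℝ)

/-- The subgroup of `ℤ^m` generated by a submonoid `M`. -/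
def gp {m : ℕ} (M : AddSubmonoid (Fin m → ℤ)) : AddSubgroup (Fin m → ℤ) :=
  AddSubgroup.closure (M : Set (Fin m → ℤ))

/-- The convex cone in `ℝ^m` generated by `M`: all nonnegative real combinations
of elements of `M`. -/
def coneM {m : ℕ} (M : AddSubmonoid (Fin m → ℤ)) : Set (Fin m → ℝ) :=
  {x | ∃ (n : ℕ) (c : Fin n → ℝ) (v : Fin n → (Fin m → ℤ)),
    (∀ i, 0 ≤ c i) ∧ (∀ i, v i ∈ M) ∧ x = ∑ i, c i • toR (v i)}

/-- Faces of `coneM M`: the cone itself, or an intersection with a supporting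
hyperplane given by a linear form nonnegative on the cone. -/
def IsFace {m : ℕ} (M : AddSubmonoid (Fin m → ℤ)) (F : Set (Fin m → ℝ)) : Prop :=
  F = coneM M ∨ ∃ α : (Fin m → ℝ) →ₗ[ℝ] ℝ,
    (∀ x ∈ coneM M, 0 ≤ α x) ∧ F = {x ∈ coneM M | α x = 0}

/-- A facet: a maximal proper face. -/
def IsFacet {m : ℕ} (M : AddSubmonoid (Fin m → ℤ)) (F : Set (Fin m → ℝ)) : Prop :=
  IsFace M F ∧ F ≠ coneM M ∧ ∀ G, IsFace M G → F ⊆ G → G = F ∨ G = coneM M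

/-- The subgroup `gp(M ∩ F)` of `ℤ^m` generated by the elements of `M` lying
in the face `F`. -/
def gpF {m : ℕ} (M : AddSubmonoid (Fin m → ℤ)) (F : Set (Fin m → ℝ)) :
    AddSubgroup (Fin m → ℤ) :=
  AddSubgroup.closure {a : Fin m → ℤ | a ∈ M ∧ toR a ∈ F}

/-- `M` is seminormal: `z ∈ gp(M)`, `2z ∈ M`, `3z ∈ M` imply `z ∈ M`. -/
def Seminormal {m : ℕ} (M : AddSubmonoid (Fin m → ℤ)) : Prop :=
  ∀ z ∈ gp M, 2 • z ∈ M → 3 • z ∈ M → z ∈ M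

/-- `M` is normal: `z ∈ gp(M)`, `kz ∈ M` for some `k ≥ 1` imply `z ∈ M`. -/
def IsNormal {m : ℕ} (M : AddSubmonoid (Fin m → ℤ)) : Prop :=
  ∀ z ∈ gp M, (∃ k : ℕ, 0 < k ∧ k • z ∈ M) → z ∈ M

/-- `M` is positive: `0` is the only invertible element. -/
def Positive {m : ℕ} (M : AddSubmonoid (Fin m → ℤ)) : Prop :=
  ∀ a ∈ M, -a ∈ M → a = 0

/-- The localization monoid `M_F` of `M` at a face `F`:
elements `a ∈ gp(M)` with `a + b ∈ M` for some `b ∈ M ∩ F`. -/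
def locM {m : ℕ} (M : AddSubmonoid (Fin m → ℤ)) (F : Set (Fin m → ℝ)) :
    Set (Fin m → ℤ) :=
  {a | a ∈ gp M ∧ ∃ b, b ∈ M ∧ toR b ∈ F ∧ a + b ∈ M}

/-- For a face `F` of `cone(M)` with defining linear form `α`,
one has `M_F ∩ ker α = gp(M ∩ F)`. -/
theorem locM_inter_ker_eq_gpF {m : ℕ} (M : AddSubmonoid (Fin m → ℤ)) (hFG : M.FG)
    (α : (Fin m → ℝ) →ₗ[ℝ] ℝ) (hα : ∀ x ∈ coneM M, 0 ≤ α x)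
    (F : Set (Fin m → ℝ)) (hF : F = {x ∈ coneM M | α x = 0}) :
    {c | c ∈ locM M F ∧ α (toR c) = 0} = (gpF M F : Set (Fin m → ℤ)) := by
  have hto_add : ∀ x y : Fin m → ℤ, toR (x + y) = toR x + toR y := by
    intro x y; funext i; simp [toR]
  have hto_neg : ∀ x : Fin m → ℤ, toR (-x) = -toR x := by
    intro x; funext i; simp [toR]
  have hto_zero : toR (0 : Fin m → ℤ) = 0 := by
    funext i; simp [toR]
  have hmemcone : ∀ a ∈ M, toR a ∈ coneM M := by
    intro a ha
    exact ⟨1, fun _ => 1, fun _ => a, fun _ => zero_le_one, fun _ => ha, by simp⟩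
  have hzeroF : toR (0 : Fin m → ℤ) ∈ F := by
    rw [hF]
    refine ⟨hmemcone 0 M.zero_mem, ?_⟩
    rw [hto_zero]; simp
  have hαF : ∀ x ∈ F, α x = 0 := by
    intro x hx; rw [hF] at hx; exact hx.2
  ext c
  constructor
  · rintro ⟨⟨hcgp, b, hbM, hbF, hcbM⟩, hαc⟩
    have hcbF : toR (c + b) ∈ F := by
      rw [hF]
      refine ⟨hmemcone _ hcbM, ?_⟩
      rw [hto_add]
      simp [hαc, hαF _ hbF]
    have h1 : c + b ∈ gpF M F :=
      AddSubgroup.subset_closure ⟨hcbM, hcbF⟩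
    have h2 : b ∈ gpF M F :=
      AddSubgroup.subset_closure ⟨hbM, hbF⟩
    have := AddSubgroup.sub_mem _ h1 h2
    simpa using this
  · intro hc
    refine AddSubgroup.closure_induction ?_ ?_ ?_ ?_ hc
    · rintro a ⟨haM, haF⟩
      refine ⟨⟨AddSubgroup.subset_closure haM, 0, M.zero_mem, hzeroF, by simpa using haM⟩, hαF _ haF⟩
    · exact ⟨⟨(gp M).zero_mem, 0, M.zero_mem, hzeroF, by simpa using M.zero_mem⟩, by rw [hto_zero]; simp⟩
    · rintro x y hx hy ⟨⟨hxgp, bx, hbxM, hbxF, hxbM⟩, hαx⟩ ⟨⟨hygp, by', hbyM, hbyF, hybM⟩, hαy⟩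
      have hbF : toR (bx + by') ∈ F := by
        rw [hF]
        refine ⟨hmemcone _ (M.add_mem hbxM hbyM), ?_⟩
        rw [hto_add]
        simp [hαF _ hbxF, hαF _ hbyF]
      refine ⟨⟨(gp M).add_mem hxgp hygp, bx + by', M.add_mem hbxM hbyM, hbF, ?_⟩, ?_⟩
      · have : (x + bx) + (y + by') ∈ M := M.add_mem hxbM hybM
        convert this using 1; abel
      · rw [hto_add]; simp [hαx, hαy]
    · rintro x hx ⟨⟨hxgp, b, hbM, hbF, hxbM⟩, hαx⟩
      have hxbF : toR (x + b) ∈ F := by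
        rw [hF]
        refine ⟨hmemcone _ hxbM, ?_⟩
        rw [hto_add]
        simp [hαx, hαF _ hbF]
      refine ⟨⟨(gp M).neg_mem hxgp, x + b, hxbM, hxbF, ?_⟩, ?_⟩
      · have : -x + (x + b) = b := by abel
        rw [this]; exact hbM
      · rw [hto_neg]; simp [hαx]
end
end

section
/- Let M ⊆ ℤ^m be an affine monoid with facets F₁,…,F_t of cone(M) defined by linear forms α₁,…,α_t. If gp(M) ∩ relint(cone(M)) ⊆ M, then for each i, M_i = (gp(M) ∩ {x : α_i(x) > 0}) ∪ gp(M ∩ F_i), where M_i = { a ∈ gp(M) : a + b ∈ M for some b ∈ M ∩ F_i }. -/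
/-!
Let `s` be the sum of the generators of `M`. Since `F` is a facet, the span of the cone is the
span of `F` plus `ℝ s`, so `a ∈ gp M` with `α a > 0` can be written `a = w + r s` with `r > 0` and
`w` a real combination of the generators lying in `F`. Adding a large multiple `b` of the sum of
those generators makes every coefficient of `a + b` positive, so `a + b` lies in
`gp M ∩ relint (cone M) ⊆ M`. The other inclusions only use that `α` vanishes on `M ∩ F`.
-/

noncomputable section

theorem LinearMap.exists_rightInverseOn_range {K V W : Type*} [Field K] [AddCommGroup V]
    [Module K V] [AddCommGroup W] [Module K W] (f : V →ₗ[K] W) :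
    ∃ g : W →ₗ[K] V, ∀ w ∈ LinearMap.range f, f (g w) = w := by
  obtain ⟨σ, hσ⟩ := f.rangeRestrict.exists_rightInverse_of_surjective f.range_rangeRestrict
  obtain ⟨g, hg⟩ := LinearMap.exists_extend σ
  refine ⟨g, fun w hw => ?_⟩
  have h := congrArg Subtype.val (LinearMap.congr_fun hσ ⟨w, hw⟩)
  rw [← hg] at h
  exact h

theorem AddSubgroup.exists_sub_eq_of_mem_closure {G : Type*} [AddCommGroup G] {s : Set G}
    (h0 : (0 : G) ∈ s) (hadd : ∀ x ∈ s, ∀ y ∈ s, x + y ∈ s) {a : G}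
    (ha : a ∈ AddSubgroup.closure s) : ∃ x ∈ s, ∃ y ∈ s, a = x - y := by
  induction ha using AddSubgroup.closure_induction with
  | mem x hx => exact ⟨x, hx, 0, h0, (sub_zero x).symm⟩
  | zero => exact ⟨0, h0, 0, h0, (sub_zero 0).symm⟩
  | add _ _ _ _ ih₁ ih₂ =>
    obtain ⟨x₁, hx₁, y₁, hy₁, rfl⟩ := ih₁
    obtain ⟨x₂, hx₂, y₂, hy₂, rfl⟩ := ih₂
    exact ⟨x₁ + x₂, hadd _ hx₁ _ hx₂, y₁ + y₂, hadd _ hy₁ _ hy₂, by abel⟩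
  | neg _ _ ih =>
    obtain ⟨x, hx, y, hy, rfl⟩ := ih
    exact ⟨y, hy, x, hx, neg_sub x y⟩

/-- With `L` a right inverse of `f : c ↦ ∑ cᵢ uᵢ` on its range, `Φ z = c + L (z - x)` is
continuous, positive near `x`, and `f (Φ z) = z` for `z` in the span. -/
theorem sum_smul_mem_intrinsicInterior {ι E : Type*} [Fintype ι] [NormedAddCommGroup E]
    [NormedSpace ℝ E] [FiniteDimensional ℝ E] (u : ι → E) {C : Set E}
    (hC : ∀ c : ι → ℝ, (∀ i, 0 ≤ c i) → ∑ i, c i • u i ∈ C)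
    (hCspan : C ⊆ Submodule.span ℝ (Set.range u)) {c : ι → ℝ} (hc : ∀ i, 0 < c i) :
    ∑ i, c i • u i ∈ intrinsicInterior ℝ C := by
  set f := Fintype.linearCombination ℝ u
  obtain ⟨L, hL⟩ := f.exists_rightInverseOn_range
  set x := ∑ i, c i • u i
  set Φ : E → ι → ℝ := fun z => c + L (z - x)
  have hΦ : Continuous Φ :=
    continuous_const.add (L.continuous_of_finiteDimensional.comp (continuous_sub_right x))
  have hspan : affineSpan ℝ C ≤ (Submodule.span ℝ (Set.range u)).toAffineSubspace :=
    affineSpan_le.2 hCspan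
  refine mem_intrinsicInterior.2 ⟨⟨x, subset_affineSpan ℝ C (hC c fun i => (hc i).le)⟩,
    mem_interior.2 ⟨Subtype.val ⁻¹' (Φ ⁻¹' Set.univ.pi fun _ => Set.Ioi 0), ?_, ?_, ?_⟩, rfl⟩
  · rintro ⟨z, hz⟩ hpos
    have hzf : z ∈ LinearMap.range f := Fintype.range_linearCombination ℝ u ▸ hspan hz
    have hfc : f c = x := Fintype.linearCombination_apply ℝ u c
    have hfΦ : f (Φ z) = z := by
      rw [map_add, hL _ (sub_mem hzf ⟨c, hfc⟩), hfc, add_sub_cancel]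
    change z ∈ C
    rw [← hfΦ, Fintype.linearCombination_apply]
    exact hC _ fun i => le_of_lt (hpos i trivial)
  · exact ((isOpen_set_pi Set.finite_univ fun _ _ => isOpen_Ioi).preimage hΦ).preimage
      continuous_subtype_val
  · simpa [Φ] using hc

section Cone

variable {m : ℕ} {M : AddSubmonoid (Fin m → ℤ)}

theorem toR_zero : toR (0 : Fin m → ℤ) = 0 := by
  funext i; simp [toR]

theorem toR_add (x y : Fin m → ℤ) : toR (x + y) = toR x + toR y := by
  funext i; simp [toR]

theorem toR_nsmul (k : ℕ) (x : Fin m → ℤ) : toR (k • x) = (k : ℝ) • toR x := by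
  funext i; simp [toR]

theorem toR_sum {ι : Type*} (s : Finset ι) (x : ι → Fin m → ℤ) :
    toR (∑ i ∈ s, x i) = ∑ i ∈ s, toR (x i) := by
  funext j; simp [toR, Finset.sum_apply]

theorem toR_mem_coneM {w : Fin m → ℤ} (hw : w ∈ M) : toR w ∈ coneM M :=
  ⟨1, fun _ => 1, fun _ => w, fun _ => zero_le_one, fun _ => hw, by simp⟩

theorem sum_smul_toR_mem_coneM {ι : Type*} [Fintype ι] {c : ι → ℝ} (hc : ∀ i, 0 ≤ c i)
    {w : ι → Fin m → ℤ} (hw : ∀ i, w i ∈ M) : ∑ i, c i • toR (w i) ∈ coneM M := by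
  let e := Fintype.equivFin ι
  exact ⟨Fintype.card ι, c ∘ e.symm, w ∘ e.symm, fun _ => hc _, fun _ => hw _,
    (Fintype.sum_equiv e.symm _ _ fun _ => rfl).symm⟩

theorem toR_mem_span_coneM {a : Fin m → ℤ} (ha : a ∈ gp M) :
    toR a ∈ Submodule.span ℝ (coneM M) := by
  have hgp : gp M ≤ (Submodule.span ℝ (coneM M)).toAddSubgroup.comap
      (AddMonoidHom.compLeft (Int.castAddHom ℝ) (Fin m)) :=
    (AddSubgroup.closure_le _).2 fun _ hw => Submodule.subset_span (toR_mem_coneM hw)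
  exact hgp ha

variable {ι : Type*} {v : ι → Fin m → ℤ}

theorem mem_of_closure_range_eq (hv : AddSubmonoid.closure (Set.range v) = M) (i : ι) :
    v i ∈ M :=
  hv ▸ AddSubmonoid.subset_closure (Set.mem_range_self i)

variable [Fintype ι]

theorem mem_coneM_iff (hv : AddSubmonoid.closure (Set.range v) = M) {x : Fin m → ℝ} :
    x ∈ coneM M ↔ ∃ c : ι → ℝ, (∀ i, 0 ≤ c i) ∧ x = ∑ i, c i • toR (v i) := by
  refine ⟨?_, fun ⟨c, hc, hx⟩ => hx ▸ sum_smul_toR_mem_coneM hc (mem_of_closure_range_eq hv)⟩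
  rintro ⟨n, c, w, hc, hw, rfl⟩
  choose k hk using fun j => AddSubmonoid.mem_closure_range_iff_of_fintype.1 (hv ▸ hw j)
  refine ⟨fun i => ∑ j, c j * k j i, fun i => Finset.sum_nonneg fun j _ =>
    mul_nonneg (hc j) (Nat.cast_nonneg _), ?_⟩
  simp only [hk, toR_sum, toR_nsmul, Finset.smul_sum, Finset.sum_smul, smul_smul]
  exact Finset.sum_comm

theorem sum_smul_toR_mem_intrinsicInterior_coneM (hv : AddSubmonoid.closure (Set.range v) = M)
    {c : ι → ℝ} (hc : ∀ i, 0 < c i) :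
    ∑ i, c i • toR (v i) ∈ intrinsicInterior ℝ (coneM M) := by
  refine sum_smul_mem_intrinsicInterior (fun i => toR (v i))
    (fun c hc => sum_smul_toR_mem_coneM hc (mem_of_closure_range_eq hv)) (fun x hx => ?_) hc
  obtain ⟨c, -, rfl⟩ := (mem_coneM_iff hv).1 hx
  exact Submodule.sum_mem _ fun i _ => Submodule.smul_mem _ _ (Submodule.subset_span ⟨i, rfl⟩)

end Cone

section Facet

variable {m : ℕ} {M : AddSubmonoid (Fin m → ℤ)} {ι : Type*} [Fintype ι] {v : ι → Fin m → ℤ}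
  {α : (Fin m → ℝ) →ₗ[ℝ] ℝ}

theorem exists_pos_generator (hv : AddSubmonoid.closure (Set.range v) = M)
    (hα : ∀ x ∈ coneM M, 0 ≤ α x) {x : Fin m → ℝ} (hx : x ∈ Submodule.span ℝ (coneM M))
    (hαx : α x ≠ 0) : ∃ i, 0 < α (toR (v i)) := by
  by_contra! h
  have hzero : Set.EqOn α (0 : (Fin m → ℝ) →ₗ[ℝ] ℝ) (coneM M) := by
    intro y hy
    obtain ⟨c, -, rfl⟩ := (mem_coneM_iff hv).1 hy
    simp [fun i => le_antisymm (h i) (hα _ (toR_mem_coneM (mem_of_closure_range_eq hv i)))]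
  exact hαx (LinearMap.eqOn_span' hzero hx)

/-- `ψ - μ α` with `μ` the least ratio `ψ / α` on the generators off the facet is nonnegative on
the cone, so it cuts out a face containing the facet; maximality forces it to vanish. -/
theorem exists_eqOn_smul_of_isFacet (hv : AddSubmonoid.closure (Set.range v) = M)
    (hα : ∀ x ∈ coneM M, 0 ≤ α x) (hF : IsFacet M {x ∈ coneM M | α x = 0})
    {ψ : (Fin m → ℝ) →ₗ[ℝ] ℝ} (hψ : ∀ x ∈ coneM M, α x = 0 → ψ x = 0) :
    ∃ μ : ℝ, Set.EqOn ψ ⇑(μ • α) (coneM M) := by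
  classical
  have hvC i : toR (v i) ∈ coneM M := toR_mem_coneM (mem_of_closure_range_eq hv i)
  have hI : (Finset.univ.filter fun i => 0 < α (toR (v i))).Nonempty := by
    obtain ⟨x, hx, hαx⟩ : ∃ x ∈ coneM M, α x ≠ 0 := by
      by_contra! h
      exact hF.2.1 (Set.ext fun x => ⟨fun hx => hx.1, fun hx => ⟨hx, h x hx⟩⟩)
    obtain ⟨i, hi⟩ := exists_pos_generator hv hα (Submodule.subset_span hx) hαx
    exact ⟨i, by simpa using hi⟩
  obtain ⟨i₀, hi₀, hmin⟩ := Finset.exists_min_image _ (fun i => ψ (toR (v i)) / α (toR (v i))) hI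
  simp only [Finset.mem_filter, Finset.mem_univ, true_and] at hi₀ hmin
  set μ := ψ (toR (v i₀)) / α (toR (v i₀))
  have hβv i : 0 ≤ (ψ - μ • α) (toR (v i)) := by
    rcases (hα _ (hvC i)).eq_or_lt with h | h
    · simp [← h, hψ _ (hvC i) h.symm]
    · have := (le_div_iff₀ h).1 (hmin i h)
      simpa [sub_nonneg] using this
  have hβ : ∀ x ∈ coneM M, 0 ≤ (ψ - μ • α) x := by
    intro x hx
    obtain ⟨c, hc, rfl⟩ := (mem_coneM_iff hv).1 hx
    simp only [map_sum, map_smul]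
    exact Finset.sum_nonneg fun i _ => smul_nonneg (hc i) (hβv i)
  have hsub : {x ∈ coneM M | α x = 0} ⊆ {x ∈ coneM M | (ψ - μ • α) x = 0} :=
    fun x ⟨hx, h0⟩ => ⟨hx, by simp [h0, hψ x hx h0]⟩
  rcases hF.2.2 _ (Or.inr ⟨_, hβ, rfl⟩) hsub with h | h
  · have hi₀F : toR (v i₀) ∈ {x ∈ coneM M | (ψ - μ • α) x = 0} :=
      ⟨hvC i₀, by simp [μ, hi₀.ne']⟩
    exact absurd (h ▸ hi₀F).2 hi₀.ne'
  · refine ⟨μ, fun x hx => sub_eq_zero.1 ?_⟩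
    exact (h.symm ▸ hx : x ∈ {x ∈ coneM M | (ψ - μ • α) x = 0}).2

theorem sub_smul_mem_span_of_isFacet (hv : AddSubmonoid.closure (Set.range v) = M)
    (hα : ∀ x ∈ coneM M, 0 ≤ α x) (hF : IsFacet M {x ∈ coneM M | α x = 0})
    {x₀ y : Fin m → ℝ} (hx₀ : x₀ ∈ Submodule.span ℝ (coneM M)) (hαx₀ : α x₀ ≠ 0)
    (hy : y ∈ Submodule.span ℝ (coneM M)) :
    y - (α y / α x₀) • x₀ ∈ Submodule.span ℝ {x ∈ coneM M | α x = 0} := by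
  by_contra hw
  obtain ⟨ψ, hψw, hψF⟩ := Submodule.exists_dual_map_eq_bot_of_notMem hw inferInstance
  have hψ : ∀ x ∈ coneM M, α x = 0 → ψ x = 0 := fun x hx h0 =>
    (Submodule.mem_bot ℝ).1 (hψF ▸ Submodule.mem_map_of_mem (Submodule.subset_span ⟨hx, h0⟩))
  obtain ⟨μ, hμ⟩ := exists_eqOn_smul_of_isFacet hv hα hF hψ
  have hμ' := LinearMap.eqOn_span' hμ
  apply hψw
  rw [map_sub, map_smul, hμ' hy, hμ' hx₀]
  simp only [LinearMap.smul_apply, smul_eq_mul]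
  field_simp
  ring

theorem exists_sum_eq_of_mem_span_facet (hv : AddSubmonoid.closure (Set.range v) = M)
    (hα : ∀ x ∈ coneM M, 0 ≤ α x) {w : Fin m → ℝ}
    (hw : w ∈ Submodule.span ℝ {x ∈ coneM M | α x = 0}) :
    ∃ f : ι → ℝ, (∀ i, α (toR (v i)) ≠ 0 → f i = 0) ∧ w = ∑ i, f i • toR (v i) := by
  have hface : {x ∈ coneM M | α x = 0} ⊆
      Submodule.span ℝ ((fun i => toR (v i)) '' {i | α (toR (v i)) = 0}) := by
    rintro x ⟨hx, h0⟩
    obtain ⟨c, hc, rfl⟩ := (mem_coneM_iff hv).1 hx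
    simp only [map_sum, map_smul, smul_eq_mul] at h0
    have hterm := (Finset.sum_eq_zero_iff_of_nonneg fun i _ =>
      mul_nonneg (hc i) (hα _ (toR_mem_coneM (mem_of_closure_range_eq hv i)))).1 h0
    refine Submodule.sum_mem _ fun i _ => ?_
    rcases mul_eq_zero.1 (hterm i (Finset.mem_univ i)) with h | h
    · simp [h]
    · exact Submodule.smul_mem _ _ (Submodule.subset_span ⟨i, h, rfl⟩)
  obtain ⟨l, hl, rfl⟩ :=
    (Finsupp.mem_span_image_iff_linearCombination ℝ).1 (Submodule.span_le.2 hface hw)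
  refine ⟨l, fun i hi => Finsupp.notMem_support_iff.1 fun h => hi (hl h), ?_⟩
  simp [Finsupp.linearCombination_apply, Finsupp.sum_fintype]

end Facet

section Localization

variable {m : ℕ} {M : AddSubmonoid (Fin m → ℤ)} {α : (Fin m → ℝ) →ₗ[ℝ] ℝ}

theorem exists_add_mem_intrinsicInterior {ι : Type*} [Fintype ι] {v : ι → Fin m → ℤ}
    (hv : AddSubmonoid.closure (Set.range v) = M) (hα : ∀ x ∈ coneM M, 0 ≤ α x)
    (hF : IsFacet M {x ∈ coneM M | α x = 0}) {a : Fin m → ℤ} (ha : a ∈ gp M)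
    (hpos : 0 < α (toR a)) :
    ∃ b ∈ M, α (toR b) = 0 ∧ toR (a + b) ∈ intrinsicInterior ℝ (coneM M) := by
  classical
  have hvM := mem_of_closure_range_eq hv
  set s := ∑ i, toR (v i)
  have hs : s ∈ coneM M := by
    simpa using sum_smul_toR_mem_coneM (c := 1) (fun _ => zero_le_one) hvM
  have hαs : 0 < α s := by
    obtain ⟨i₀, hi₀⟩ := exists_pos_generator hv hα (toR_mem_span_coneM ha) hpos.ne'
    rw [map_sum]
    exact hi₀.trans_le (Finset.single_le_sum (fun i _ => hα _ (toR_mem_coneM (hvM i)))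
      (Finset.mem_univ i₀))
  obtain ⟨f, hf0, hf⟩ := exists_sum_eq_of_mem_span_facet hv hα
    (sub_smul_mem_span_of_isFacet hv hα hF (Submodule.subset_span hs) hαs.ne'
      (toR_mem_span_coneM ha))
  set r := α (toR a) / α s
  have hr : 0 < r := div_pos hpos hαs
  obtain ⟨N, hN⟩ := exists_nat_ge (∑ i, |f i|)
  set Z := Finset.univ.filter fun i => α (toR (v i)) = 0
  refine ⟨N • ∑ i ∈ Z, v i, AddSubmonoid.nsmul_mem _ (AddSubmonoid.sum_mem _ fun i _ => hvM i) N,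
    ?_, ?_⟩
  · rw [toR_nsmul, toR_sum, map_smul, map_sum,
      Finset.sum_eq_zero fun i hi => (Finset.mem_filter.1 hi).2, smul_zero]
  have hsum : toR (a + N • ∑ i ∈ Z, v i) =
      ∑ i, (r + f i + if α (toR (v i)) = 0 then (N : ℝ) else 0) • toR (v i) := by
    rw [toR_add, toR_nsmul, toR_sum, Finset.smul_sum, Finset.sum_filter]
    simp only [add_smul, Finset.sum_add_distrib, ← Finset.smul_sum, ← hf, ite_smul, zero_smul]
    abel
  rw [hsum]
  refine sum_smul_toR_mem_intrinsicInterior_coneM hv fun i => ?_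
  by_cases h : α (toR (v i)) = 0
  · have : |f i| ≤ ∑ j, |f j| :=
      Finset.single_le_sum (fun j _ => abs_nonneg (f j)) (Finset.mem_univ i)
    rw [if_pos h]
    linarith [neg_abs_le (f i)]
  · rw [if_neg h, hf0 i h]
    linarith

theorem locM_subset_union (hα : ∀ x ∈ coneM M, 0 ≤ α x) :
    locM M {x ∈ coneM M | α x = 0} ⊆
      {a | a ∈ gp M ∧ 0 < α (toR a)} ∪ gpF M {x ∈ coneM M | α x = 0} := by
  rintro a ⟨ha, b, hb, ⟨-, hαb⟩, hab⟩
  have hαab : α (toR (a + b)) = α (toR a) := by rw [toR_add, map_add, hαb, add_zero]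
  rcases (hα _ (toR_mem_coneM hab)).lt_or_eq with h | h
  · exact Or.inl ⟨ha, hαab ▸ h⟩
  · refine Or.inr (add_sub_cancel_right a b ▸ sub_mem ?_ ?_)
    · exact AddSubgroup.subset_closure ⟨hab, toR_mem_coneM hab, h.symm⟩
    · exact AddSubgroup.subset_closure ⟨hb, toR_mem_coneM hb, hαb⟩

theorem gpF_subset_locM :
    (gpF M {x ∈ coneM M | α x = 0} : Set (Fin m → ℤ)) ⊆ locM M {x ∈ coneM M | α x = 0} := by
  intro a ha
  obtain ⟨x, ⟨hx, -⟩, y, ⟨hy, hyF⟩, rfl⟩ := AddSubgroup.exists_sub_eq_of_mem_closure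
    (s := {a | a ∈ M ∧ toR a ∈ {x ∈ coneM M | α x = 0}})
    ⟨M.zero_mem, toR_mem_coneM M.zero_mem, by rw [toR_zero, map_zero]⟩
    (fun x ⟨hx, _, hαx⟩ y ⟨hy, _, hαy⟩ => ⟨add_mem hx hy, toR_mem_coneM (add_mem hx hy),
      by rw [toR_add, map_add, hαx, hαy, add_zero]⟩) ha
  exact ⟨sub_mem (AddSubgroup.subset_closure hx) (AddSubgroup.subset_closure hy), y, hy, hyF,
    (sub_add_cancel x y).symm ▸ hx⟩

end Localization

/-- If `gp(M) ∩ relint(cone(M)) ⊆ M`, then for each facet `F_i`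
with defining linear form `α_i`,
`M_i = (gp(M) ∩ {α_i > 0}) ∪ gp(M ∩ F_i)`. -/
theorem locM_eq_union {m : ℕ} (M : AddSubmonoid (Fin m → ℤ)) (hFG : M.FG)
    (t : ℕ) (F : Fin t → Set (Fin m → ℝ)) (α : Fin t → ((Fin m → ℝ) →ₗ[ℝ] ℝ))
    (hα : ∀ i, ∀ x ∈ coneM M, 0 ≤ α i x)
    (hFdef : ∀ i, F i = {x ∈ coneM M | α i x = 0})
    (hfacets : ∀ G : Set (Fin m → ℝ), IsFacet M G ↔ ∃ i, G = F i)
    (hrel : ∀ z ∈ gp M, toR z ∈ intrinsicInterior ℝ (coneM M) → z ∈ M) :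
    ∀ i, locM M (F i) =
      {a : Fin m → ℤ | a ∈ gp M ∧ 0 < α i (toR a)} ∪ (gpF M (F i) : Set (Fin m → ℤ)) := by
  intro i
  obtain ⟨S, hS⟩ := hFG
  have hv : AddSubmonoid.closure (Set.range ((↑) : S → Fin m → ℤ)) = M := by simpa using hS
  have hF : IsFacet M {x ∈ coneM M | α i x = 0} := hFdef i ▸ (hfacets _).2 ⟨i, rfl⟩
  rw [hFdef i]
  refine (locM_subset_union (hα i)).antisymm (Set.union_subset ?_ gpF_subset_locM)
  rintro a ⟨ha, hpos⟩
  obtain ⟨b, hb, hαb, hint⟩ := exists_add_mem_intrinsicInterior hv (hα i) hF ha hpos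
  exact ⟨ha, b, hb, ⟨toR_mem_coneM hb, hαb⟩,
    hrel _ (add_mem ha (AddSubgroup.subset_closure hb)) hint⟩
end
end
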